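/- arXiv:1811.00113 — 5 statements merged into one kernel-verified Lean document; each statement's English description precedes it below -/
import Mathlib

section
/- For an odd prime p, the number of triples (x,y,z) in F_p^3 with (x,y,z) ≠ (0,0,0), satisfying x^2 + y^2 + z^2 = x*y*z and fixed by the Markoff move m_3 (i.e., satisfying x*y − z = z), is exactly p − 4 − (−1/p), where (−1/p) is the Legendre symbol of −1 mod p. -/
open Finset

lemma char_sum_aux (p : ℕ) [Fact p.Prime] (hp : p ≠ 2) :
    ∑ x : ZMod p, quadraticChar (ZMod p) (x ^ 2 - 4) = -1 := by
  have hchar : ringChar (ZMod p) ≠ 2 := by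
    rw [ZMod.ringChar_zmod_n]; exact hp
  have h2 : (2 : ZMod p) ≠ 0 := by
    have := Ring.two_ne_zero hchar
    simpa using this
  have h4 : (4 : ZMod p) ≠ 0 := by
    intro h
    apply h2
    have h' : (2 : ZMod p) * 2 = 0 := by linear_combination h
    rcases mul_eq_zero.mp h' with h'' | h'' <;> exact h''
  set χ := quadraticChar (ZMod p) with hχ
  have hshift : ∑ x : ZMod p, χ (x ^ 2 - 4) = ∑ x : ZMod p, χ (x ^ 2 + 4 * x) := by
    refine (Fintype.sum_equiv (Equiv.addRight (2 : ZMod p)) _ _ ?_).symm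
    intro x
    simp only [Equiv.coe_addRight]
    ring_nf
  rw [hshift]
  have h0 : ∑ x : ZMod p, χ (x ^ 2 + 4 * x)
      = ∑ x ∈ univ.erase (0 : ZMod p), χ (x ^ 2 + 4 * x) := by
    rw [Finset.sum_erase_eq_sub (mem_univ _), hχ]
    simp
  rw [h0]
  have key : ∑ x ∈ univ.erase (0 : ZMod p), χ (x ^ 2 + 4 * x)
      = ∑ s ∈ univ.erase (1 : ZMod p), χ s := by
    refine Finset.sum_nbij' (fun x => 1 + 4 * x⁻¹) (fun s => 4 * (s - 1)⁻¹) ?_ ?_ ?_ ?_ ?_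
    · intro x hx
      have hx0 : x ≠ 0 := by simpa using hx
      simp only [mem_erase, mem_univ, and_true]
      intro h
      have h' : (4 : ZMod p) * x⁻¹ = 0 := by linear_combination h
      rcases mul_eq_zero.mp h' with h'' | h''
      · exact h4 h''
      · exact hx0 (by simpa using inv_eq_zero.mp h'')
    · intro s hs
      have hs1 : s ≠ 1 := by simpa using hs
      simp only [mem_erase, mem_univ, and_true]
      intro h
      rcases mul_eq_zero.mp h with h'' | h''
      · exact h4 h''
      · exact hs1 (by
          have := inv_eq_zero.mp h''
          have := sub_eq_zero.mp this
          exact this)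
    · intro x hx
      rw [add_sub_cancel_left, mul_inv, inv_inv, ← mul_assoc, mul_inv_cancel₀ h4, one_mul]
    · intro s hs
      rw [mul_inv, inv_inv, ← mul_assoc, mul_inv_cancel₀ h4, one_mul]
      ring
    · intro x hx
      have hx0 : x ≠ 0 := by simpa using hx
      have hid : x ^ 2 + 4 * x = (1 + 4 * x⁻¹) * x ^ 2 := by
        field_simp
      rw [hid, map_mul, quadraticChar_sq_one' hx0, mul_one]
  rw [key, Finset.sum_erase_eq_sub (mem_univ (1 : ZMod p)), hχ, quadraticChar_sum_zero hchar,
    map_one, zero_sub]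

lemma fiber_count_aux (p : ℕ) [Fact p.Prime] (hp : p ≠ 2) (x : ZMod p) :
    (Fintype.card {y : ZMod p // x ≠ 0 ∧ (x ^ 2 - 4) * (y ^ 2 - 4) = 16} : ℤ)
      = if x = 0 ∨ x ^ 2 = 4 then 0 else 1 + quadraticChar (ZMod p) (x ^ 2 - 4) := by
  have hchar : ringChar (ZMod p) ≠ 2 := by
    rw [ZMod.ringChar_zmod_n]; exact hp
  have h2 : (2 : ZMod p) ≠ 0 := by
    have := Ring.two_ne_zero hchar
    simpa using this
  have h16 : (16 : ZMod p) ≠ 0 := by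
    intro h
    apply h2
    have h' : (2 : ZMod p) * (2 * (2 * 2)) = 0 := by linear_combination h
    rcases mul_eq_zero.mp h' with h'' | h''
    · exact h''
    rcases mul_eq_zero.mp h'' with h'' | h''
    · exact h''
    rcases mul_eq_zero.mp h'' with h'' | h'' <;> exact h''
  by_cases hx0 : x = 0
  · rw [if_pos (Or.inl hx0)]
    have : IsEmpty {y : ZMod p // x ≠ 0 ∧ (x ^ 2 - 4) * (y ^ 2 - 4) = 16} :=
      ⟨fun y => y.2.1 hx0⟩
    simp
  by_cases hx4 : x ^ 2 = 4
  · rw [if_pos (Or.inr hx4)]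
    have : IsEmpty {y : ZMod p // x ≠ 0 ∧ (x ^ 2 - 4) * (y ^ 2 - 4) = 16} := by
      refine ⟨fun y => h16 ?_⟩
      obtain ⟨y, -, hy⟩ := y
      linear_combination (y ^ 2 - 4) * hx4 - hy
    simp
  rw [if_neg (by tauto)]
  have hb : x ^ 2 - 4 ≠ 0 := sub_ne_zero.mpr hx4
  set a : ZMod p := 4 * x ^ 2 * (x ^ 2 - 4)⁻¹ with ha
  have hmul : (x ^ 2 - 4) * a = (2 * x) ^ 2 := by
    rw [ha]
    field_simp
    ring
  have hiff : ∀ y : ZMod p, (x ≠ 0 ∧ (x ^ 2 - 4) * (y ^ 2 - 4) = 16) ↔ y ^ 2 = a := by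
    intro y
    constructor
    · rintro ⟨-, h⟩
      apply mul_left_cancel₀ hb
      linear_combination h - hmul
    · intro h
      refine ⟨hx0, ?_⟩
      linear_combination (x ^ 2 - 4) * h + hmul
  have hcard := quadraticChar_card_sqrts hchar a
  have hχa : quadraticChar (ZMod p) a = quadraticChar (ZMod p) (x ^ 2 - 4) := by
    have h2x : (2 : ZMod p) * x ≠ 0 := mul_ne_zero h2 hx0
    have hprod : quadraticChar (ZMod p) (x ^ 2 - 4) * quadraticChar (ZMod p) a = 1 := by
      rw [← map_mul, hmul, quadraticChar_sq_one' h2x]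
    have hsq : quadraticChar (ZMod p) (x ^ 2 - 4) * quadraticChar (ZMod p) (x ^ 2 - 4) = 1 := by
      rw [← map_mul, ← pow_two, quadraticChar_sq_one' hb]
    calc quadraticChar (ZMod p) a
        = quadraticChar (ZMod p) (x ^ 2 - 4) * quadraticChar (ZMod p) (x ^ 2 - 4)
          * quadraticChar (ZMod p) a := by rw [hsq, one_mul]
      _ = quadraticChar (ZMod p) (x ^ 2 - 4)
          * (quadraticChar (ZMod p) (x ^ 2 - 4) * quadraticChar (ZMod p) a) := by ring
      _ = quadraticChar (ZMod p) (x ^ 2 - 4) := by rw [hprod, mul_one]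
  rw [← hχa]
  rw [add_comm]
  rw [← hcard]
  congr 1
  rw [Set.toFinset_card]
  exact Fintype.card_congr (Equiv.subtypeEquivRight (fun y => by simpa using hiff y))

theorem fixed_points_m3_count (p : ℕ) [Fact p.Prime] (hp : p ≠ 2) :
    (Nat.card {v : ZMod p × ZMod p × ZMod p //
        v ≠ (0, 0, 0) ∧
        v.1 ^ 2 + v.2.1 ^ 2 + v.2.2 ^ 2 = v.1 * v.2.1 * v.2.2 ∧
        v.1 * v.2.1 - v.2.2 = v.2.2} : ℤ)
      = (p : ℤ) - 4 - legendreSym p (-1) := by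
  have hchar : ringChar (ZMod p) ≠ 2 := by
    rw [ZMod.ringChar_zmod_n]; exact hp
  have h2 : (2 : ZMod p) ≠ 0 := by
    have := Ring.two_ne_zero hchar
    simpa using this
  have h4 : (4 : ZMod p) ≠ 0 := by
    intro h
    apply h2
    have h' : (2 : ZMod p) * 2 = 0 := by linear_combination h
    rcases mul_eq_zero.mp h' with h'' | h'' <;> exact h''
  have hleg : legendreSym p (-1) = quadraticChar (ZMod p) (-1) := by
    simp [legendreSym]
  -- the equivalence with pairs
  let Q : ZMod p → ZMod p → Prop := fun x y => x ≠ 0 ∧ (x ^ 2 - 4) * (y ^ 2 - 4) = 16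
  have e : {v : ZMod p × ZMod p × ZMod p //
        v ≠ (0, 0, 0) ∧
        v.1 ^ 2 + v.2.1 ^ 2 + v.2.2 ^ 2 = v.1 * v.2.1 * v.2.2 ∧
        v.1 * v.2.1 - v.2.2 = v.2.2} ≃ {w : ZMod p × ZMod p // Q w.1 w.2} := by
    refine ⟨fun v => ⟨(v.1.1, v.1.2.1), ?_⟩,
            fun w => ⟨(w.1.1, w.1.2, w.1.1 * w.1.2 * (2 : ZMod p)⁻¹), ?_, ?_, ?_⟩, ?_, ?_⟩
    · obtain ⟨⟨x, y, z⟩, hne, h1, h2'⟩ := v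
      simp only at h1 h2' ⊢
      constructor
      · intro h0
        subst h0
        apply hne
        have h2z : (2 : ZMod p) * z = 0 := by linear_combination -h2'
        have hz : z = 0 := by
          rcases mul_eq_zero.mp h2z with h | h
          · exact absurd h h2
          · exact h
        subst hz
        have hy2 : y ^ 2 = 0 := by linear_combination h1
        have hy : y = 0 := by
          have := sq_eq_zero_iff.mp hy2
          exact this
        subst hy
        rfl
      · linear_combination (x * y - 2 * z) * h2' - 4 * h1
    · -- v ≠ 0
      intro h
      exact w.2.1 (congrArg Prod.fst h)
    · -- equation 1
      obtain ⟨⟨x, y⟩, hx, hq⟩ := w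
      simp only
      have hz : (2 : ZMod p) * (x * y * (2 : ZMod p)⁻¹) = x * y := by
        rw [mul_comm (2 : ZMod p), mul_assoc, inv_mul_cancel₀ h2, mul_one]
      have hy2 : x ^ 2 * y ^ 2 = 4 * x ^ 2 + 4 * y ^ 2 := by linear_combination hq
      apply mul_left_cancel₀ h4
      linear_combination -hy2 + (2 * (x * y * (2 : ZMod p)⁻¹) - x * y) * hz
    · -- equation 2
      obtain ⟨⟨x, y⟩, hx, hq⟩ := w
      simp only
      have hz : (2 : ZMod p) * (x * y * (2 : ZMod p)⁻¹) = x * y := by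
        rw [mul_comm (2 : ZMod p), mul_assoc, inv_mul_cancel₀ h2, mul_one]
      linear_combination -hz
    · -- left inverse
      rintro ⟨⟨x, y, z⟩, hne, h1, h2'⟩
      apply Subtype.ext
      simp only at h2'
      have hxy : x * y = 2 * z := by linear_combination h2'
      have h3 : x * y * (2 : ZMod p)⁻¹ = z := by
        rw [hxy, mul_comm (2 : ZMod p) z, mul_assoc, mul_inv_cancel₀ h2, mul_one]
      simp [h3]
    · rintro ⟨⟨x, y⟩, h⟩
      rfl
  have hcardS : (Nat.card {v : ZMod p × ZMod p × ZMod p //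
        v ≠ (0, 0, 0) ∧
        v.1 ^ 2 + v.2.1 ^ 2 + v.2.2 ^ 2 = v.1 * v.2.1 * v.2.2 ∧
        v.1 * v.2.1 - v.2.2 = v.2.2}) = ∑ x : ZMod p, Fintype.card {y : ZMod p // Q x y} := by
    rw [Nat.card_eq_fintype_card,
      Fintype.card_congr (e.trans (Equiv.subtypeProdEquivSigmaSubtype Q)),
      Fintype.card_sigma]
  rw [hcardS, hleg]
  push_cast
  rw [Finset.sum_congr rfl (fun x _ => fiber_count_aux p hp x)]
  -- now evaluate the sum
  have hpoint : ∀ x : ZMod p,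
      (if x = 0 ∨ x ^ 2 = 4 then (0 : ℤ) else 1 + quadraticChar (ZMod p) (x ^ 2 - 4))
      = (1 + quadraticChar (ZMod p) (x ^ 2 - 4))
        - ((if x = (0 : ZMod p) then (1 + quadraticChar (ZMod p) (-4) : ℤ) else 0)
          + (if x = (2 : ZMod p) then (1 : ℤ) else 0)
          + (if x = (-2 : ZMod p) then (1 : ℤ) else 0)) := by
    intro x
    by_cases h0 : x = 0
    · subst h0
      rw [if_pos (Or.inl rfl), if_pos rfl,
        if_neg (fun h => h2 h.symm),
        if_neg (fun h => h2 (by linear_combination h))]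
      norm_num
    by_cases hx2 : x = 2
    · subst hx2
      rw [if_pos (Or.inr (by norm_num)), if_neg h0, if_pos rfl,
        if_neg (fun h => h4 (by linear_combination h))]
      norm_num [quadraticChar_zero]
    by_cases hx2' : x = -2
    · subst hx2'
      rw [if_pos (Or.inr (by norm_num)), if_neg h0, if_neg (fun h => h4 (by linear_combination -h)),
        if_pos rfl]
      norm_num [quadraticChar_zero]
    · rw [if_neg, if_neg h0, if_neg hx2, if_neg hx2']
      · ring
      · rintro (h | h)
        · exact h0 h
        · have : (x - 2) * (x + 2) = 0 := by linear_combination h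
          rcases mul_eq_zero.mp this with h' | h'
          · exact hx2 (by linear_combination h')
          · exact hx2' (by linear_combination h')
  rw [Finset.sum_congr rfl (fun x _ => hpoint x), Finset.sum_sub_distrib,
    Finset.sum_add_distrib, Finset.sum_add_distrib, Finset.sum_add_distrib,
    Finset.sum_ite_eq' univ (0 : ZMod p), Finset.sum_ite_eq' univ (2 : ZMod p),
    Finset.sum_ite_eq' univ (-2 : ZMod p), Finset.sum_const, Finset.card_univ, ZMod.card,
    char_sum_aux p hp]
  simp only [mem_univ, if_pos]
  have hm4 : quadraticChar (ZMod p) (-4) = quadraticChar (ZMod p) (-1) := by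
    have : (-4 : ZMod p) = -1 * 2 ^ 2 := by norm_num
    rw [this, map_mul, quadraticChar_sq_one' h2, mul_one]
  rw [hm4]
  ring
end

section
/- For an odd prime p, the word m_2 ∘ m_3 ∘ m_1 acting on F_p^3 has no fixed points on the Markoff surface other than (0,0,0). Concretely, the only solution in F_p^3 to the system xz − y = y, x(xz−y) − z = z, (xz−y)(x(xz−y)−z) − x = x, x^2+y^2+z^2 = xyz is (0,0,0). -/
theorem no_fixed_point_m2_m3_m1 (p : ℕ) [Fact p.Prime] (hp : p ≠ 2)
    (x y z : ZMod p)
    (h1 : x * z - y = y)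
    (h2 : x * (x * z - y) - z = z)
    (h3 : (x * z - y) * (x * (x * z - y) - z) - x = x)
    (hM : x ^ 2 + y ^ 2 + z ^ 2 = x * y * z) :
    x = 0 ∧ y = 0 ∧ z = 0 := by
  rw [h1] at h2 h3
  rw [h2] at h3
  -- now h1 : x*z - y = y, h2 : x*y - z = z, h3 : y*z - x = x
  have h2ne : (2 : ZMod p) ≠ 0 := by
    intro h
    have hd : p ∣ 2 := by
      have : ((2 : ℕ) : ZMod p) = 0 := by exact_mod_cast h
      exact (ZMod.natCast_eq_zero_iff 2 p).mp this
    exact hp ((Nat.prime_dvd_prime_iff_eq Fact.out Nat.prime_two).mp hd)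
  have hx2 : 2 * x ^ 2 = x * y * z := by linear_combination -x * h3
  have hy2 : 2 * y ^ 2 = x * y * z := by linear_combination -y * h1
  have hz2 : 2 * z ^ 2 = x * y * z := by linear_combination -z * h2
  have hxyz : x * y * z = 0 := by linear_combination 2 * hM - hx2 - hy2 - hz2
  have sq : ∀ w : ZMod p, 2 * w ^ 2 = x * y * z → w = 0 := by
    intro w hw
    have h0 : 2 * w ^ 2 = 0 := hw.trans hxyz
    rcases mul_eq_zero.mp h0 with h | h
    · exact absurd h h2ne
    · exact pow_eq_zero_iff (by norm_num) |>.mp h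
  exact ⟨sq x hx2, sq y hy2, sq z hz2⟩
end

section
/- For any 2×2 matrices A and B with determinant 1 over a commutative ring, the Fricke trace identity holds: tr(A)^2 + tr(B)^2 + tr(AB)^2 = tr(A)*tr(B)*tr(AB) + tr(A*B*A⁻¹*B⁻¹) + 2. -/
open Matrix

theorem fricke_trace_identity {R : Type*} [CommRing R]
    (A B : Matrix (Fin 2) (Fin 2) R) (hA : A.det = 1) (hB : B.det = 1) :
    (trace A) ^ 2 + (trace B) ^ 2 + (trace (A * B)) ^ 2
      = trace A * trace B * trace (A * B) + trace (A * B * A⁻¹ * B⁻¹) + 2 := by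
  have hAi : A⁻¹ = A.adjugate := by rw [Matrix.inv_def, hA, Ring.inverse_one, one_smul]
  have hBi : B⁻¹ = B.adjugate := by rw [Matrix.inv_def, hB, Ring.inverse_one, one_smul]
  rw [hAi, hBi, Matrix.adjugate_fin_two, Matrix.adjugate_fin_two]
  rw [Matrix.det_fin_two] at hA hB
  simp [Matrix.trace_fin_two, Matrix.mul_apply, Fin.sum_univ_two]
  linear_combination (2 * (A 0 0 * A 1 1 - A 0 1 * A 1 0) - (A 0 0 + A 1 1) ^ 2) * hB
    + (2 - (B 0 0 + B 1 1) ^ 2) * hA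
end

section
/- Let F be a field, x = ξ + ξ⁻¹ for some nonzero ξ ∈ F, κ = x^2/(x^2−4) when x^2 ≠ 4, and t ∈ F nonzero. Then the triple (x, t + κ/t, t*ξ + κ/(t*ξ)) satisfies the Markoff equation translated appropriately: x^2 + y^2 + z^2 − x*y*z = 0 where y = t + κ/t and z = t*ξ + κ/(t*ξ). -/
/-!
Write `y = t + κ/t` and `z = s + κ/s` with `s = tξ`. Since `ξ² - xξ + 1 = 0`, both
`t² + s² - x t s = t² (ξ² - xξ + 1)` and `κ²/t² + κ²/s² - x κ²/(t s)` vanish, while the cross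
terms contribute `4κ - x κ (ξ + ξ⁻¹) = 4κ - κ x²`. So `x² + y² + z² - x y z = x² - κ (x² - 4)`,
which is zero for `κ = x² / (x² - 4)`.
-/

lemma sq_sub_mul_add_one_eq_zero_of_eq_add_inv {F : Type*} [Field F] {ξ x : F} (hξ : ξ ≠ 0)
    (hx : x = ξ + ξ⁻¹) : ξ ^ 2 - x * ξ + 1 = 0 := by
  rw [hx]
  field_simp
  ring

lemma markoff_form_add_div_eq {F : Type*} [Field F] {ξ t x : F} (κ : F) (hξ : ξ ≠ 0)
    (ht : t ≠ 0) (h : ξ ^ 2 - x * ξ + 1 = 0) :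
    x ^ 2 + (t + κ / t) ^ 2 + (t * ξ + κ / (t * ξ)) ^ 2
      - x * (t + κ / t) * (t * ξ + κ / (t * ξ)) = x ^ 2 - κ * (x ^ 2 - 4) := by
  field_simp
  linear_combination (t ^ 4 * ξ ^ 2 + κ ^ 2 - x * t ^ 2 * κ * ξ) * h

theorem markoff_param_solution {F : Type*} [Field F]
    (ξ t : F) (hξ : ξ ≠ 0) (ht : t ≠ 0)
    (x : F) (hx : x = ξ + ξ⁻¹) (hx4 : x ^ 2 ≠ 4)
    (κ : F) (hκ : κ = x ^ 2 / (x ^ 2 - 4)) :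
    x ^ 2 + (t + κ / t) ^ 2 + (t * ξ + κ / (t * ξ)) ^ 2
      - x * (t + κ / t) * (t * ξ + κ / (t * ξ)) = 0 := by
  rw [markoff_form_add_div_eq κ hξ ht (sq_sub_mul_add_one_eq_zero_of_eq_add_inv hξ hx), hκ,
    div_mul_cancel₀ _ (sub_ne_zero.mpr hx4), sub_self]
end

section
/- Define rot: F^3 → F^3 by rot(x,y,z) = (x, z, xz − y). For x = ξ + ξ⁻¹ (ξ ∈ F^*, ξ^2 ≠ 1) and κ = x^2/(x^2−4), applying rot to the point (x, t + κ/t, tξ + κ/(tξ)) yields the point (x, tξ + κ/(tξ), tξ^2 + κ/(tξ^2)); i.e., rot multiplies the parameter t by ξ. -/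
theorem rot_multiplies_parameter {F : Type*} [Field F]
    (ξ t : F) (hξ : ξ ≠ 0) (hξ1 : ξ ^ 2 ≠ 1) (ht : t ≠ 0)
    (x : F) (hx : x = ξ + ξ⁻¹)
    (κ : F) (hκ : κ = x ^ 2 / (x ^ 2 - 4)) :
    (fun v : F × F × F => (v.1, v.2.2, v.1 * v.2.2 - v.2.1))
        (x, t + κ / t, t * ξ + κ / (t * ξ))
      = (x, t * ξ + κ / (t * ξ), t * ξ ^ 2 + κ / (t * ξ ^ 2)) := by
  subst hx
  simp only [Prod.mk.injEq, true_and]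
  field_simp
  ring
end
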